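/- arXiv:2204.11012 — 5 statements merged into one kernel-verified Lean document; each statement's English description precedes it below -/
import Mathlib

section
/- Given a highway cover labelling Γ = (H, L) over G with landmarks R, for any s,t ∈ V, the minimum of d_{G[V∖R]}(s,t) (the distance in the subgraph induced by removing all landmarks) and the highway upper bound d⊤_st equals d_G(s,t). -/
open scoped Classical

variable {V : Type*}

namespace BatchHL

/-- `l` is a walk in `G` from `r` to `v`, given as its (nonempty) list of visited vertices. -/
def IsWalk (G : SimpleGraph V) (r v : V) (l : List V) : Prop :=
  l ≠ [] ∧ l.head? = some r ∧ l.getLast? = some v ∧ l.Chain' G.Adj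

/-- The length (number of edges) of a walk given as a list of vertices. -/
def len (l : List V) : ℕ := l.length - 1

/-- The walk `l` passes through the (undirected) edge `(a, b)`. -/
def Passes (l : List V) (a b : V) : Prop :=
  (a, b) ∈ l.zip l.tail ∨ (b, a) ∈ l.zip l.tail

/-- `P_G(r,v)`: the set of all shortest paths between `r` and `v` in `G`. -/
def SPaths (G : SimpleGraph V) (r v : V) : Set (List V) :=
  {l | IsWalk G r v l ∧ ∀ l', IsWalk G r v l' → l.length ≤ l'.length}

/-- `(a,b)` is an edge deleted by the batch update turning `G` into `G'`. -/
def DeletedEdge (G G' : SimpleGraph V) (a b : V) : Prop := G.Adj a b ∧ ¬ G'.Adj a b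

/-- `(a,b)` is an edge inserted by the batch update turning `G` into `G'`. -/
def InsertedEdge (G G' : SimpleGraph V) (a b : V) : Prop := G'.Adj a b ∧ ¬ G.Adj a b

/-- `(a,b)` is an edge of the batch update `B` turning `G` into `G'`. -/
def UpdatedEdge (G G' : SimpleGraph V) (a b : V) : Prop :=
  InsertedEdge G G' a b ∨ DeletedEdge G G' a b

/-- The walk `l` passes through a deleted edge. -/
def PassesDeleted (G G' : SimpleGraph V) (l : List V) : Prop :=
  ∃ a b, DeletedEdge G G' a b ∧ Passes l a b

/-- The walk `l` passes through an inserted edge. -/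
def PassesInserted (G G' : SimpleGraph V) (l : List V) : Prop :=
  ∃ a b, InsertedEdge G G' a b ∧ Passes l a b

/-- `v` is affected w.r.t. landmark `r` iff the set of shortest paths changes. -/
def Affected (G G' : SimpleGraph V) (r v : V) : Prop := SPaths G r v ≠ SPaths G' r v

/-- A composite path from `r` to `v`: a prefix lying in `G` followed by a suffix lying in `G'`. -/
def IsComposite (G G' : SimpleGraph V) (r v : V) (l : List V) : Prop :=
  ∃ w l₁ l₂, IsWalk G r w l₁ ∧ IsWalk G' w v l₂ ∧ l = l₁ ++ l₂.tail

/-- A significant composite path: a composite path whose `G`-prefix passes through a deleted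
edge and whose `G'`-suffix passes through an inserted edge. -/
def IsSigComposite (G G' : SimpleGraph V) (r v : V) (l : List V) : Prop :=
  ∃ w l₁ l₂, IsWalk G r w l₁ ∧ IsWalk G' w v l₂ ∧ l = l₁ ++ l₂.tail ∧
    PassesDeleted G G' l₁ ∧ PassesInserted G G' l₂

/-- `v` is composite-path affected w.r.t. `r`. -/
def CPAffected (G G' : SimpleGraph V) (r v : V) : Prop :=
  Affected G G' r v ∨ ∃ l, IsSigComposite G G' r v l ∧ (len l : ℕ∞) ≤ G.edist r v

/-- A distance labelling: each label entry `(r, δ) ∈ L v` satisfies `δ = d_G(r,v)`. -/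
def IsLabelling (G : SimpleGraph V) (L : V → Set (V × ℕ∞)) : Prop :=
  ∀ v r δ, (r, δ) ∈ L v → δ = G.edist r v

/-- A 2-hop cover labelling: a distance labelling such that every pair `s, t` has a common
hub `r` lying on a shortest path between `s` and `t`. -/
def Is2HopCover (G : SimpleGraph V) (L : V → Set (V × ℕ∞)) : Prop :=
  IsLabelling G L ∧ ∀ s t : V, ∃ r, (r, G.edist r s) ∈ L s ∧ (r, G.edist r t) ∈ L t ∧
    G.edist s r + G.edist r t = G.edist s t

/-- A highway cover labelling `Γ = (H, L)` over `G` with landmarks `R`.  The highway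
distances `δ_H(r,r_i)` are by definition the graph distances `d_G(r,r_i)`. -/
def IsHighwayCover (G : SimpleGraph V) (R : Set V) (L : V → Set (V × ℕ∞)) : Prop :=
  (∀ v r δ, (r, δ) ∈ L v → r ∈ R ∧ δ = G.edist r v) ∧
  ∀ v, v ∉ R → ∀ r ∈ R,
    G.edist r v = sInf {x | ∃ ri δ, (ri, δ) ∈ L v ∧ x = δ + G.edist r ri}

/-- The landmark length / landmark distance values: `⊤` for "no path", otherwise a pair of a
length and a landmark flag (a `Prop`). -/
abbrev LLen := WithTop (ℕ × Prop)

/-- Lexicographic order on landmark lengths, with flag ordering `True < False`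
(i.e. `x ≤ y` at equal length iff `y`'s flag implies `x`'s flag). -/
def llLe : LLen → LLen → Prop
  | _, none => True
  | none, some _ => False
  | some a, some b => a.1 < b.1 ∨ (a.1 = b.1 ∧ (b.2 → a.2))

/-- Strict lexicographic order on landmark lengths. -/
def llLt (x y : LLen) : Prop := llLe x y ∧ ¬ llLe y x

/-- The extension operator `⊕`: `(d,l) ⊕ w = (d+1, True)` if `w ∈ R∖{r}`, else `(d+1, l)`. -/
def oplus (R : Set V) (r : V) : LLen → V → LLen
  | none, _ => none
  | some a, w => some (a.1 + 1, (w ∈ R ∧ w ≠ r) ∨ a.2)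

/-- The landmark length `lml(l)` of a walk `l` starting at `r`: its length together with the
flag recording whether it passes through a landmark other than `r`. -/
def lmLen (R : Set V) (r : V) (l : List V) : LLen :=
  some (len l, ∃ w ∈ l, w ∈ R ∧ w ≠ r)

/-- The landmark distance `d^L_G(r,v)`: the lexicographically minimal landmark length of a
walk from `r` to `v` (with `True < False` on flags), `⊤` if there is none.  Explicitly, its
length component is the minimal walk length and its flag holds iff some walk of minimal
length passes through a landmark other than `r`. -/
noncomputable def lmDist (G : SimpleGraph V) (R : Set V) (r v : V) : LLen :=
  if ∃ l, IsWalk G r v l then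
    some (sInf {n | ∃ l, IsWalk G r v l ∧ len l = n},
      ∃ l, IsWalk G r v l ∧ len l = sInf {n | ∃ l', IsWalk G r v l' ∧ len l' = n} ∧
        ∃ w ∈ l, w ∈ R ∧ w ≠ r)
  else ⊤

/-- Order on extended landmark lengths `(landmark length, deletion flag)`, lexicographic with
`True < False` on the deletion flag. -/
def ellLe (x y : LLen × Prop) : Prop := llLt x.1 y.1 ∨ (x.1 = y.1 ∧ (y.2 → x.2))

/-- Strict order on extended landmark lengths. -/
def ellLt (x y : LLen × Prop) : Prop := ellLe x y ∧ ¬ ellLe y x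

/-- `β(r,v) = (d^L_G(r,v), True)`. -/
noncomputable def beta (G : SimpleGraph V) (R : Set V) (r v : V) : LLen × Prop :=
  (lmDist G R r v, True)

/-- The distance bound `d_bou(u, S)` of `u` w.r.t. `S` in `G'`. -/
noncomputable def dbou (G' : SimpleGraph V) (r : V) (S : Set V) (u : V) : ℕ∞ :=
  ⨅ (w : V) (_ : G'.Adj u w ∧ w ∉ S), (G'.edist r w + 1)

/-- The set `{ d^L_{G'}(r,w) ⊕ v | w ∈ N_{G'}(v) ∖ S }`, whose lexicographic minimum is the
landmark distance bound `d^L_bou(v,S)`. -/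
noncomputable def lmBouSet (G' : SimpleGraph V) (R : Set V) (r v : V) (S : Set V) :
    Set LLen :=
  {x | ∃ w, G'.Adj v w ∧ w ∉ S ∧ x = oplus R r (lmDist G' R r w) v}

/-- The subgraph `G[V ∖ R]` obtained by removing all landmarks (landmarks become isolated). -/
def removeLandmarks (G : SimpleGraph V) (R : Set V) : SimpleGraph V where
  Adj u w := G.Adj u w ∧ u ∉ R ∧ w ∉ R
  symm := ⟨fun u w ⟨h, hu, hw⟩ => ⟨h.symm, hw, hu⟩⟩
  loopless := ⟨fun u ⟨h, _, _⟩ => G.loopless.irrefl u h⟩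

/-- A highway cover labelling in which every vertex (including landmarks) is labelled, i.e.
the highway cover property holds for all `v ∈ V` (this is the labelling produced on all
vertices by the highway labelling construction). -/
def IsHighwayCoverAll (G : SimpleGraph V) (R : Set V) (L : V → Set (V × ℕ∞)) : Prop :=
  (∀ v r δ, (r, δ) ∈ L v → r ∈ R ∧ δ = G.edist r v) ∧
  ∀ v, ∀ r ∈ R,
    G.edist r v = sInf {x | ∃ ri δ, (ri, δ) ∈ L v ∧ x = δ + G.edist r ri}

/-! A shortest `s`–`t` path either avoids every landmark, and then it survives in `G[V ∖ R]`, or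
it passes through a landmark `r`; in the latter case the highway cover property at `s` and at `t`
yields labels `(rᵢ, d(rᵢ, s))` and `(rⱼ, d(rⱼ, t))` realising `d(r, s)` and `d(r, t)`, and the
triangle inequality through `r` bounds `d⊤_st` by `d(s, r) + d(r, t) = d(s, t)`. Conversely, neither
quantity can undercut `d(s, t)`: one is a distance in a subgraph, the other a sum of distances along
an `s`–`t` route through two landmarks. -/

/-- The highway upper bound `d⊤_st`. -/
noncomputable def highwayBound (G : SimpleGraph V) (L : V → Set (V × ℕ∞)) (s t : V) : ℕ∞ :=
  sInf {x : ℕ∞ | ∃ ri rj ds dt, (ri, ds) ∈ L s ∧ (rj, dt) ∈ L t ∧ x = ds + G.edist ri rj + dt}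

section

variable {G : SimpleGraph V} {R : Set V} {L : V → Set (V × ℕ∞)}

lemma removeLandmarks_le : removeLandmarks G R ≤ G := fun _ _ h => h.1

lemma edist_removeLandmarks_le_length {s t : V} (p : G.Walk s t) (hp : ∀ v ∈ p.support, v ∉ R) :
    (removeLandmarks G R).edist s t ≤ p.length := by
  have hedges : ∀ e ∈ p.edges, e ∈ (removeLandmarks G R).edgeSet := by
    intro e he
    induction e using Sym2.ind with
    | _ a b =>
      exact ⟨p.adj_of_mem_edges he, hp a (p.fst_mem_support_of_mem_edges he),
        hp b (p.snd_mem_support_of_mem_edges he)⟩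
  simpa only [SimpleGraph.Walk.length_transfer] using SimpleGraph.edist_le (p.transfer _ hedges)

lemma edist_add_edist_le_length {s t r : V} (p : G.Walk s t) (hr : r ∈ p.support) :
    G.edist s r + G.edist r t ≤ p.length := by
  calc G.edist s r + G.edist r t
      ≤ (p.takeUntil r hr).length + (p.dropUntil r hr).length :=
        add_le_add (SimpleGraph.edist_le _) (SimpleGraph.edist_le _)
    _ = p.length := by
        rw [← Nat.cast_add, ← SimpleGraph.Walk.length_append, p.take_spec hr]

lemma edist_le_highwayBound (hL : IsLabelling G L) (s t : V) :
    G.edist s t ≤ highwayBound G L s t := by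
  refine le_sInf ?_
  rintro _ ⟨ri, rj, ds, dt, hds, hdt, rfl⟩
  rw [hL s ri ds hds, hL t rj dt hdt, SimpleGraph.edist_comm (u := ri), add_assoc]
  exact SimpleGraph.edist_triangle.trans (add_le_add_right SimpleGraph.edist_triangle _)

/-- In `ℕ∞` an infimum is attained as soon as it is finite. -/
lemma IsHighwayCoverAll.exists_label_add_edist_eq (hL : IsHighwayCoverAll G R L) {r v : V}
    (hr : r ∈ R) (hv : G.edist r v ≠ ⊤) :
    ∃ ri δ, (ri, δ) ∈ L v ∧ δ + G.edist r ri = G.edist r v := by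
  have hcover := hL.2 v r hr
  have hne : {x | ∃ ri δ, (ri, δ) ∈ L v ∧ x = δ + G.edist r ri}.Nonempty :=
    Set.nonempty_iff_ne_empty.2 fun hempty => hv (by rw [hcover, hempty, sInf_empty])
  obtain ⟨ri, δ, hmem, hmin⟩ := csInf_mem hne
  exact ⟨ri, δ, hmem, hmin.symm.trans hcover.symm⟩

lemma IsHighwayCoverAll.highwayBound_le (hL : IsHighwayCoverAll G R L) {r : V} (hr : r ∈ R)
    (s t : V) : highwayBound G L s t ≤ G.edist r s + G.edist r t := by
  rcases eq_or_ne (G.edist r s) ⊤ with hs | hs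
  · simp [hs]
  rcases eq_or_ne (G.edist r t) ⊤ with ht | ht
  · simp [ht]
  obtain ⟨ri, ds, hds, hs⟩ := hL.exists_label_add_edist_eq hr hs
  obtain ⟨rj, dt, hdt, ht⟩ := hL.exists_label_add_edist_eq hr ht
  calc highwayBound G L s t ≤ ds + G.edist ri rj + dt := sInf_le ⟨ri, rj, ds, dt, hds, hdt, rfl⟩
    _ ≤ ds + (G.edist ri r + G.edist r rj) + dt := by gcongr; exact SimpleGraph.edist_triangle
    _ = (ds + G.edist r ri) + (dt + G.edist r rj) := by
        rw [SimpleGraph.edist_comm (u := ri)]; ring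
    _ = G.edist r s + G.edist r t := by rw [hs, ht]

end

/-- Given a highway cover labelling `Γ = (H,L)` over `G` with landmarks `R`,
for any `s,t ∈ V`, the minimum of `d_{G[V∖R]}(s,t)` (the distance in the subgraph obtained by
removing all landmarks) and the highway upper bound `d⊤_st` equals `d_G(s,t)`. -/
theorem query_answering_correct (G : SimpleGraph V) (R : Set V) (L : V → Set (V × ℕ∞))
    (hL : IsHighwayCoverAll G R L) (s t : V) :
    min ((removeLandmarks G R).edist s t)
        (sInf {x : ℕ∞ | ∃ ri rj ds dt, (ri, ds) ∈ L s ∧ (rj, dt) ∈ L t ∧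
          x = ds + G.edist ri rj + dt})
      = G.edist s t := by
  refine le_antisymm ?_ (le_min (SimpleGraph.edist_anti removeLandmarks_le)
    (edist_le_highwayBound (fun v r δ h => (hL.1 v r δ h).2) s t))
  rcases eq_or_ne (G.edist s t) ⊤ with htop | htop
  · exact htop ▸ le_top
  obtain ⟨p, hp⟩ := SimpleGraph.exists_walk_of_edist_ne_top htop
  rw [← hp]
  by_cases hR : ∃ r ∈ p.support, r ∈ R
  · obtain ⟨r, hrp, hrR⟩ := hR
    calc _ ≤ highwayBound G L s t := min_le_right _ _
      _ ≤ G.edist r s + G.edist r t := hL.highwayBound_le hrR s t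
      _ ≤ p.length := by
          rw [SimpleGraph.edist_comm (u := r)]; exact edist_add_edist_le_length p hrp
  · push Not at hR
    exact (min_le_left _ _).trans (edist_removeLandmarks_le_length p hR)

end BatchHL
end

section
/- If a vertex v is affected by a batch update B w.r.t. landmark r (P_G(r,v) ≠ P_{G'}(r,v)), then there exists a composite path p from r to v of length at most d_G(r,v) that passes through some edge of B, where p decomposes into a prefix lying in G followed by a suffix lying in G'. -/
/-!
If every shortest `r`–`v` path of `G` survives in `G'`, and every `G'`-walk from `r` to `v` of
length at most `d_G(r,v)` already lies in `G`, then `d_G(r,v) = d_{G'}(r,v)` and `G`, `G'` have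
the same shortest `r`–`v` paths. So for an affected `v` one of these two conditions fails, and the
offending walk is itself a composite path (with trivial `G'`-suffix, resp. trivial `G`-prefix)
that uses a deleted, resp. inserted, edge.
-/

open scoped Classical

variable {V : Type*}

theorem List.isChain_iff_forall_mem_zip_tail {α : Type*} {R : α → α → Prop} {l : List α} :
    l.IsChain R ↔ ∀ a b, (a, b) ∈ l.zip l.tail → R a b := by
  induction l using List.twoStepInduction <;> simp_all [or_imp, forall_and]

theorem List.exists_mem_zip_tail_of_isChain_of_not_isChain {α : Type*} {R S : α → α → Prop}
    {l : List α} (hR : l.IsChain R) (hS : ¬ l.IsChain S) :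
    ∃ a b, (a, b) ∈ l.zip l.tail ∧ R a b ∧ ¬ S a b := by
  by_contra! h
  exact hS (List.isChain_iff_forall_mem_zip_tail.2 fun a b hab =>
    h a b hab (List.isChain_iff_forall_mem_zip_tail.1 hR a b hab))

namespace BatchHL

variable {G G' H : SimpleGraph V} {r v : V} {l : List V}

lemma isWalk_singleton (G : SimpleGraph V) (v : V) : IsWalk G v v [v] :=
  ⟨List.cons_ne_nil v [], rfl, rfl, List.isChain_singleton v⟩

lemma isWalk_support (p : G.Walk r v) : IsWalk G r v p.support := by
  refine ⟨p.support_ne_nil, ?_, ?_, p.isChain_adj_support⟩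
  · rw [List.head?_eq_some_head p.support_ne_nil, p.head_support]
  · rw [List.getLast?_eq_some_getLast p.support_ne_nil, p.getLast_support]

lemma IsWalk.edist_le (h : IsWalk G r v l) : G.edist r v ≤ len l := by
  obtain ⟨hne, hhead, hlast, hchain⟩ := h
  rw [List.head?_eq_some_head hne, Option.some_inj] at hhead
  rw [List.getLast?_eq_some_getLast hne, Option.some_inj] at hlast
  have hlen : (SimpleGraph.Walk.ofSupport l hne hchain).length = len l :=
    SimpleGraph.Walk.length_ofSupport hne hchain
  simpa only [hhead, hlast, hlen] using (SimpleGraph.Walk.ofSupport l hne hchain).edist_le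

lemma exists_isWalk_len_eq_edist (h : G.edist r v ≠ ⊤) :
    ∃ l, IsWalk G r v l ∧ (len l : ℕ∞) = G.edist r v := by
  obtain ⟨p, hp⟩ := SimpleGraph.exists_walk_of_edist_ne_top h
  refine ⟨p.support, isWalk_support p, ?_⟩
  rw [len, p.length_support, Nat.add_sub_cancel, hp]

lemma mem_sPaths_iff : l ∈ SPaths G r v ↔ IsWalk G r v l ∧ (len l : ℕ∞) ≤ G.edist r v := by
  refine ⟨fun ⟨hl, hmin⟩ => ⟨hl, ?_⟩, fun ⟨hl, hlen⟩ => ⟨hl, fun l' hl' => ?_⟩⟩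
  · rcases eq_or_ne (G.edist r v) ⊤ with htop | htop
    · simp [htop]
    obtain ⟨m, hm, hmlen⟩ := exists_isWalk_len_eq_edist htop
    rw [← hmlen, len, len]
    exact_mod_cast Nat.sub_le_sub_right (hmin m hm) 1
  · have hle : len l ≤ len l' := by exact_mod_cast hlen.trans hl'.edist_le
    have hpos : 0 < l'.length := List.length_pos_iff.2 hl'.1
    unfold len at hle
    omega

lemma IsWalk.of_isChain (h : IsWalk G r v l) (hH : l.IsChain H.Adj) : IsWalk H r v l :=
  ⟨h.1, h.2.1, h.2.2.1, hH⟩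

lemma IsWalk.exists_passes_of_not_isWalk (h : IsWalk G r v l) (hH : ¬ IsWalk H r v l) :
    ∃ a b, G.Adj a b ∧ ¬ H.Adj a b ∧ Passes l a b := by
  obtain ⟨a, b, hab, hG, hH⟩ := List.exists_mem_zip_tail_of_isChain_of_not_isChain h.2.2.2
    fun hc => hH (h.of_isChain hc)
  exact ⟨a, b, hG, hH, Or.inl hab⟩

lemma IsComposite.of_isWalk_left (h : IsWalk G r v l) : IsComposite G G' r v l :=
  ⟨v, l, [v], h, isWalk_singleton G' v, by simp⟩

lemma IsComposite.of_isWalk_right (h : IsWalk G' r v l) : IsComposite G G' r v l := by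
  refine ⟨r, [r], l, isWalk_singleton G r, h, ?_⟩
  obtain ⟨hne, hhead, -, -⟩ := h
  cases l with
  | nil => exact absurd rfl hne
  | cons a t => cases Option.some_inj.1 hhead; rfl

section StableShortestPaths

variable (hG : ∀ l ∈ SPaths G r v, IsWalk G' r v l)
  (hG' : ∀ l, IsWalk G' r v l → (len l : ℕ∞) ≤ G.edist r v → IsWalk G r v l)
include hG hG'

lemma edist_eq_of_forall_isWalk : G'.edist r v = G.edist r v := by
  refine le_antisymm ?_ (not_lt.1 fun hlt => ?_)
  · rcases eq_or_ne (G.edist r v) ⊤ with htop | htop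
    · simp [htop]
    obtain ⟨l, hl, hlen⟩ := exists_isWalk_len_eq_edist htop
    exact (hG l (mem_sPaths_iff.2 ⟨hl, hlen.le⟩)).edist_le.trans_eq hlen
  · obtain ⟨l, hl, hlen⟩ := exists_isWalk_len_eq_edist hlt.ne_top
    exact (hlen ▸ hlt).not_ge (hG' l hl (hlen.trans_lt hlt).le).edist_le

lemma sPaths_eq_of_forall_isWalk : SPaths G r v = SPaths G' r v := by
  ext l
  rw [mem_sPaths_iff, mem_sPaths_iff, edist_eq_of_forall_isWalk hG hG']
  exact ⟨fun ⟨hl, hlen⟩ => ⟨hG l (mem_sPaths_iff.2 ⟨hl, hlen⟩), hlen⟩,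
    fun ⟨hl, hlen⟩ => ⟨hG' l hl hlen, hlen⟩⟩

end StableShortestPaths

/-- If `v` is affected by the batch update w.r.t. `r`, then there exists a
composite path `p` from `r` to `v` of length at most `d_G(r,v)` that passes through some
updated edge. -/
theorem affected_implies_composite (G G' : SimpleGraph V) (r v : V)
    (h : Affected G G' r v) :
    ∃ l, IsComposite G G' r v l ∧ (len l : ℕ∞) ≤ G.edist r v ∧
      ∃ a b, UpdatedEdge G G' a b ∧ Passes l a b := by
  by_contra hnone
  apply h
  refine sPaths_eq_of_forall_isWalk (fun l hl => ?_) (fun l hl hlen => ?_)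
  · obtain ⟨hlG, hlen⟩ := mem_sPaths_iff.1 hl
    by_contra hlG'
    obtain ⟨a, b, hG, hG', hab⟩ := hlG.exists_passes_of_not_isWalk hlG'
    exact hnone ⟨l, .of_isWalk_left hlG, hlen, a, b, .inr ⟨hG, hG'⟩, hab⟩
  · by_contra hlG
    obtain ⟨a, b, hG', hG, hab⟩ := hl.exists_passes_of_not_isWalk hlG
    exact hnone ⟨l, .of_isWalk_right hl, hlen, a, b, .inl ⟨hG', hG⟩, hab⟩

end BatchHL
end

section
/- Let d^L_{G'}(r,v) = (d, l) be the landmark distance from r to v in G'. If d = ∞ or l = True, then in the minimal highway cover labelling Γ' of G' the vertex v has no r-label; otherwise v has exactly the r-label (r, d). -/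
open scoped Classical

variable {V : Type*}

namespace BatchHL

/-!
A landmark `w ≠ r` lies on a shortest `r`–`v` path exactly when `d(r,w) + d(w,v) = d(r,v)`, so
the flag of `d^L(r,v)` is this metric condition. Keeping `(r, d(r,v))` at `v` precisely when `v`
is reachable from `r` and the flag is false gives a highway cover: for a reachable `v`, a
landmark `rᵢ` with `d(r,rᵢ) + d(rᵢ,v) = d(r,v)` and `d(rᵢ,v)` least has no landmark between
itself and `v`, so its label is kept. Hence a minimal cover has no redundant `r`-label. Conversely
any cover realises `d(r,v)` through some label `(rᵢ, d(rᵢ,v))` with `rᵢ` between `r` and `v`;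
when the flag is false this forces `rᵢ = r`.
-/

open SimpleGraph

section Walks

variable {G : SimpleGraph V} {a b : V}

lemma isWalk_iff_exists_support_eq {l : List V} :
    IsWalk G a b l ↔ ∃ p : G.Walk a b, p.support = l := by
  constructor
  · rintro ⟨hne, ha, hb, hchain⟩
    have hchain' : l.IsChain G.Adj := hchain
    have ha' : l.head hne = a := (List.head_eq_iff_head?_eq_some hne).mpr ha
    have hb' : l.getLast hne = b := (List.getLast_eq_iff_getLast?_eq_some hne).mpr hb
    exact ⟨(Walk.ofSupport l hne hchain').copy ha' hb', by simp⟩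
  · rintro ⟨p, rfl⟩
    refine ⟨p.support_ne_nil, ?_, ?_, p.isChain_adj_support⟩
    · rw [← p.cons_tail_support, List.head?_cons]
    · rw [List.getLast?_eq_some_getLast p.support_ne_nil, p.getLast_support]

lemma len_support (p : G.Walk a b) : len p.support = p.length := by
  simp [len, p.length_support]

lemma setOf_len_isWalk :
    {n | ∃ l, IsWalk G a b l ∧ len l = n} = Set.range (Walk.length : G.Walk a b → ℕ) := by
  ext n
  simp only [Set.mem_ofPred_eq, Set.mem_range, isWalk_iff_exists_support_eq]
  constructor
  · rintro ⟨_, ⟨p, rfl⟩, rfl⟩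
    exact ⟨p, (len_support p).symm⟩
  · rintro ⟨p, rfl⟩
    exact ⟨p.support, ⟨p, rfl⟩, len_support p⟩

lemma sInf_len_isWalk : sInf {n | ∃ l, IsWalk G a b l ∧ len l = n} = G.dist a b := by
  rw [setOf_len_isWalk, dist_eq_sInf]

lemma _root_.SimpleGraph.Reachable.exists_walk_length_eq_dist_mem_support_iff
    (h : G.Reachable a b) {w : V} :
    (∃ p : G.Walk a b, p.length = G.dist a b ∧ w ∈ p.support) ↔
      G.edist a w + G.edist w b = G.edist a b := by
  constructor
  · rintro ⟨p, hp, hw⟩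
    obtain ⟨q₁, q₂, rfl⟩ := Walk.mem_support_iff_exists_append.mp hw
    refine le_antisymm ?_ G.edist_triangle
    calc G.edist a w + G.edist w b ≤ q₁.length + q₂.length :=
          add_le_add (edist_le q₁) (edist_le q₂)
      _ = G.edist a b := by rw [← h.coe_dist_eq_edist, ← hp, Walk.length_append, Nat.cast_add]
  · intro hsum
    have hfin : G.edist a w + G.edist w b ≠ ⊤ := hsum ▸ edist_ne_top_iff_reachable.mpr h
    obtain ⟨q₁, hq₁⟩ := exists_walk_of_edist_ne_top (WithTop.add_ne_top.mp hfin).1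
    obtain ⟨q₂, hq₂⟩ := exists_walk_of_edist_ne_top (WithTop.add_ne_top.mp hfin).2
    refine ⟨q₁.append q₂, ?_, (Walk.mem_support_append_iff q₁ q₂).mpr (.inl q₁.end_mem_support)⟩
    exact_mod_cast (by rw [Walk.length_append, Nat.cast_add, hq₁, hq₂, hsum,
      h.coe_dist_eq_edist] : ((q₁.append q₂).length : ℕ∞) = G.dist a b)

lemma reachable_of_edist_add_edist_eq (h : G.Reachable a b) {w : V}
    (hsum : G.edist a w + G.edist w b = G.edist a b) : G.Reachable w b := by
  rw [← edist_ne_top_iff_reachable] at h ⊢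
  exact ne_top_of_le_ne_top (hsum ▸ h) le_add_self

end Walks

def ShortestPathViaLandmark (G : SimpleGraph V) (R : Set V) (r v : V) : Prop :=
  ∃ w ∈ R, w ≠ r ∧ G.edist r w + G.edist w v = G.edist r v

section LandmarkDistance

variable {G : SimpleGraph V} {R : Set V} {r v : V}

lemma lmDist_of_reachable (h : G.Reachable r v) :
    lmDist G R r v = some (G.dist r v, ShortestPathViaLandmark G R r v) := by
  have hwalk : ∃ l, IsWalk G r v l := ⟨_, isWalk_iff_exists_support_eq.mpr ⟨h.some, rfl⟩⟩
  simp only [lmDist, hwalk, ↓reduceIte, sInf_len_isWalk]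
  congr 2
  simp only [ShortestPathViaLandmark, ← h.exists_walk_length_eq_dist_mem_support_iff,
    isWalk_iff_exists_support_eq]
  refine propext ⟨?_, ?_⟩
  · rintro ⟨_, ⟨p, rfl⟩, hp, w, hw, hwR, hwr⟩
    exact ⟨w, hwR, hwr, p, (len_support p).symm.trans hp, hw⟩
  · rintro ⟨w, hwR, hwr, p, hp, hw⟩
    exact ⟨p.support, ⟨p, rfl⟩, (len_support p).trans hp, w, hw, hwR, hwr⟩

lemma lmDist_of_not_reachable (h : ¬ G.Reachable r v) : lmDist G R r v = ⊤ := by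
  refine if_neg ?_
  rintro ⟨l, hl⟩
  obtain ⟨p, -⟩ := isWalk_iff_exists_support_eq.mp hl
  exact h ⟨p⟩

end LandmarkDistance

def prunedLabelling (G : SimpleGraph V) (R : Set V) (u : V) : Set (V × ℕ∞) :=
  {x | x.1 ∈ R ∧ G.Reachable x.1 u ∧ x.2 = G.edist x.1 u ∧ ¬ ShortestPathViaLandmark G R x.1 u}

section HighwayCover

variable {G : SimpleGraph V} {R : Set V} {r v : V}

lemma exists_landmark_between_not_shortestPathViaLandmark (hr : r ∈ R) (h : G.Reachable r v) :
    ∃ ri ∈ R, G.edist r ri + G.edist ri v = G.edist r v ∧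
      ¬ ShortestPathViaLandmark G R ri v := by
  obtain ⟨ri, ⟨hri, hsum⟩, hmin⟩ :=
    (InvImage.wf (fun w => G.edist w v) wellFounded_lt).has_min
      {w | w ∈ R ∧ G.edist r w + G.edist w v = G.edist r v} ⟨r, hr, by simp⟩
  refine ⟨ri, hri, hsum, fun ⟨w, hwR, hwri, hw⟩ => hmin w ⟨hwR, ?_⟩ ?_⟩
  · refine le_antisymm ?_ G.edist_triangle
    calc G.edist r w + G.edist w v ≤ G.edist r ri + G.edist ri w + G.edist w v := by
          gcongr; exact G.edist_triangle
      _ = G.edist r v := by rw [add_assoc, hw, hsum]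
  · have hwv : G.Reachable w v :=
      reachable_of_edist_add_edist_eq (reachable_of_edist_add_edist_eq h hsum) hw
    show G.edist w v < G.edist ri v
    rw [← hw]
    exact ENat.lt_add_left (edist_ne_top_iff_reachable.mpr hwv) (edist_pos_of_ne hwri.symm)

lemma isHighwayCover_prunedLabelling :
    IsHighwayCover G R (prunedLabelling G R) := by
  refine ⟨fun u ri δ ⟨hri, _, hδ, _⟩ => ⟨hri, hδ⟩, fun u _ r hr => le_antisymm ?_ ?_⟩
  · refine le_sInf ?_
    rintro _ ⟨ri, δ, ⟨-, -, hδ : δ = G.edist ri u, -⟩, rfl⟩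
    rw [hδ, add_comm]
    exact G.edist_triangle
  · by_cases h : G.Reachable r u
    · obtain ⟨ri, hri, hsum, hnot⟩ := exists_landmark_between_not_shortestPathViaLandmark hr h
      exact sInf_le ⟨ri, _, ⟨hri, reachable_of_edist_add_edist_eq h hsum, rfl, hnot⟩,
        by rw [← hsum, add_comm]⟩
    · simp [edist_eq_top_of_not_reachable h]

lemma IsHighwayCover.mem_of_not_shortestPathViaLandmark {L : V → Set (V × ℕ∞)}
    (hL : IsHighwayCover G R L) (hr : r ∈ R) (hv : v ∉ R) (h : G.Reachable r v)
    (hnot : ¬ ShortestPathViaLandmark G R r v) : (r, G.edist r v) ∈ L v := by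
  have hcover := hL.2 v hv r hr
  have hne : {x | ∃ ri δ, (ri, δ) ∈ L v ∧ x = δ + G.edist r ri}.Nonempty := by
    by_contra hempty
    rw [Set.not_nonempty_iff_eq_empty.mp hempty, sInf_empty] at hcover
    exact edist_ne_top_iff_reachable.mpr h hcover
  obtain ⟨ri, δ, hmem, hδsum⟩ := csInf_mem hne
  obtain ⟨hri, hδ⟩ := hL.1 v ri δ hmem
  rw [← hcover, hδ] at hδsum
  obtain rfl : ri = r := by
    by_contra hne
    exact hnot ⟨ri, hri, hne, by rw [hδsum, add_comm]⟩
  simpa [← hδ] using hmem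

end HighwayCover

/-- **Lemma 4.** Let `d^L_{G'}(r,v) = (d,l)`.  If `d = ∞` or `l = True` then
`v` has no `r`-label in the minimal highway cover labelling `Γ'` of `G'`; otherwise `v` has
exactly the `r`-label `(r, d)`. -/
theorem r_label_characterization (G' : SimpleGraph V) (R : Set V) (r v : V)
    (hr : r ∈ R) (hv : v ∉ R) (L' : V → Set (V × ℕ∞))
    (hL' : IsHighwayCover G' R L')
    (hmin : ∀ L'', IsHighwayCover G' R L'' → ∀ u, L' u ⊆ L'' u) :
    ((lmDist G' R r v = ⊤ ∨ ∃ d fl, lmDist G' R r v = some (d, fl) ∧ fl) →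
        ∀ δ : ℕ∞, (r, δ) ∉ L' v) ∧
    (∀ d fl, lmDist G' R r v = some (d, fl) → ¬ fl →
        ∀ δ : ℕ∞, ((r, δ) ∈ L' v ↔ δ = (d : ℕ∞))) := by
  have hpruned : ∀ δ, (r, δ) ∈ L' v →
      G'.Reachable r v ∧ ¬ ShortestPathViaLandmark G' R r v := fun δ hδ =>
    let ⟨_, hreach, _, hnot⟩ := hmin _ isHighwayCover_prunedLabelling v hδ
    ⟨hreach, hnot⟩
  by_cases hreach : G'.Reachable r v
  · rw [lmDist_of_reachable hreach]
    refine ⟨?_, fun d fl hd hfl δ => ?_⟩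
    · rintro (h | ⟨d, fl, h, hfl⟩) δ hδ
      · exact Option.some_ne_none _ h
      · cases h
        exact (hpruned δ hδ).2 hfl
    · cases hd
      rw [hreach.coe_dist_eq_edist]
      refine ⟨fun hδ => (hL'.1 v r δ hδ).2, ?_⟩
      rintro rfl
      exact hL'.mem_of_not_shortestPathViaLandmark hr hv hreach hfl
  · rw [lmDist_of_not_reachable hreach]
    exact ⟨fun _ δ hδ => hreach (hpruned δ hδ).1, fun _ _ h => (Option.some_ne_none _ h.symm).elim⟩

end BatchHL
end

section
/- Suppose v is LD-affected by a batch update w.r.t. landmark r and d^L_G(r,v) < d^L_{G'}(r,v) (landmark distance strictly increases). Then every path from r to v in G of minimal landmark length passes through a deleted edge, and hence has extended landmark length at most β(r,v) = (d^L_G(r,v), True). -/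
open scoped Classical

variable {V : Type*}

namespace BatchHL

theorem _root_.List.isChain_iff_forall_mem_zip_tail_s10 {α : Type*} {R' : α → α → Prop}
    {l : List α} : l.IsChain R' ↔ ∀ a b, (a, b) ∈ l.zip l.tail → R' a b := by
  induction l using List.twoStepInduction with
  | nil | singleton => simp
  | cons_cons a b t _ ih => simp [List.isChain_cons_cons, ih, or_imp, forall_and]

theorem IsWalk.of_not_passesDeleted {G G' : SimpleGraph V} {r v : V} {l : List V}
    (hl : IsWalk G r v l) (hl' : ¬ PassesDeleted G G' l) : IsWalk G' r v l := by
  obtain ⟨hne, hhead, hlast, hchain⟩ := hl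
  refine ⟨hne, hhead, hlast, List.isChain_iff_forall_mem_zip_tail_s10.2 fun a b hab => ?_⟩
  by_contra hG'
  exact hl' ⟨a, b, ⟨List.isChain_iff_forall_mem_zip_tail_s10.1 hchain a b hab, hG'⟩, Or.inl hab⟩

theorem llLe_lmDist_lmLen {G : SimpleGraph V} (R : Set V) {r v : V} {l : List V}
    (hl : IsWalk G r v l) : llLe (lmDist G R r v) (lmLen R r l) := by
  have hinf : sInf {n | ∃ l', IsWalk G r v l' ∧ len l' = n} ≤ len l := Nat.sInf_le ⟨l, hl, rfl⟩
  simp only [lmDist, show ∃ l, IsWalk G r v l from ⟨l, hl⟩, ↓reduceIte, lmLen, llLe]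
  rcases hinf.lt_or_eq with hlt | heq
  · exact Or.inl hlt
  · exact Or.inr ⟨heq, fun ⟨w, hw, hwR⟩ => ⟨l, hl, heq.symm, w, hw, hwR⟩⟩

theorem passesDeleted_of_lmLen_eq_lmDist {G G' : SimpleGraph V} {R : Set V} {r v : V}
    (h : llLt (lmDist G R r v) (lmDist G' R r v)) {l : List V} (hl : IsWalk G r v l)
    (hlen : lmLen R r l = lmDist G R r v) : PassesDeleted G G' l := by
  by_contra hl'
  -- a walk avoiding the deleted edges survives in `G'`, so `d^L_{G'}(r,v) ≤ lml(l) = d^L_G(r,v)`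
  exact h.2 (hlen ▸ llLe_lmDist_lmLen R (hl.of_not_passesDeleted hl'))

theorem increase_case_general (G G' : SimpleGraph V) (R : Set V) (r v : V)
    (h : llLt (lmDist G R r v) (lmDist G' R r v)) :
    ∀ l, IsWalk G r v l → lmLen R r l = lmDist G R r v →
      PassesDeleted G G' l ∧
      ellLe (lmLen R r l, PassesDeleted G G' l) (beta G R r v) := by
  intro l hl hlen
  have hdel := passesDeleted_of_lmLen_eq_lmDist h hl hlen
  exact ⟨hdel, Or.inr ⟨hlen, fun _ => hdel⟩⟩

/-- **Lemma 6, case 1.** Suppose `v` is LD-affected w.r.t. `r` with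
`d^L_G(r,v) < d^L_{G'}(r,v)` (landmark distance strictly increases).  Then every path from
`r` to `v` in `G` of minimal landmark length passes through a deleted edge, and hence its
extended landmark length is at most `β(r,v) = (d^L_G(r,v), True)`. -/
theorem increase_case (G G' : SimpleGraph V) (R : Set V) (r v : V) (hr : r ∈ R)
    (h : llLt (lmDist G R r v) (lmDist G' R r v)) :
    ∀ l, IsWalk G r v l → lmLen R r l = lmDist G R r v →
      PassesDeleted G G' l ∧
      ellLe (lmLen R r l, PassesDeleted G G' l) (beta G R r v) :=
  increase_case_general G G' R r v h

end BatchHL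
end

section
/- Let S ⊂ V∖{r} and suppose that for every vertex w ∉ S the distance d_{G'}(r,w) is known (equals d_G(r,w)). Then iteratively removing from S a vertex v of minimal distance bound d_bou(v,S) and assigning it distance d_bou(v,S) computes d_{G'}(r,v) correctly for every v ∈ S; i.e., the greedy boundary-repair process is correct. -/
open scoped Classical

variable {V : Type*}

namespace BatchHL

/-! The distance from `r` is a lower bound for every assigned value: by well-founded induction
on the value, each value in `S` is `f w + 1` for a neighbour `w` whose value already dominates its
distance.  It is also an upper bound: a vertex of `S` exceeds no neighbour's value by more than
one, since a neighbour with a smaller value takes part in its minimum, so following any walk back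
to `r` bounds the value by the walk's length. -/

theorem _root_.SimpleGraph.Adj.edist_le_edist_add_one {G : SimpleGraph V} {r v w : V}
    (h : G.Adj w v) : G.edist r v ≤ G.edist r w + 1 :=
  calc G.edist r v ≤ G.edist r w + G.edist w v := SimpleGraph.edist_triangle
    _ = G.edist r w + 1 := by rw [SimpleGraph.edist_eq_one_iff_adj.mpr h]

section GreedyRepair

variable {G : SimpleGraph V} {r : V} {S : Set V} {f : V → ℕ∞}

theorem le_add_one_of_adj_of_greedy
    (hgreedy : ∀ v ∈ S, f v = ⨅ (w : V) (_ : G.Adj v w ∧ (w ∉ S ∨ f w < f v)), (f w + 1))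
    {v w : V} (hv : v ∈ S) (hadj : G.Adj v w) : f v ≤ f w + 1 := by
  by_contra! hlt
  have hw_lt : f w < f v := lt_of_le_of_lt le_self_add hlt
  exact hlt.not_ge <| hgreedy v hv ▸ iInf₂_le w ⟨hadj, Or.inr hw_lt⟩

theorem le_length_of_greedy (hr : r ∉ S) (hout : ∀ w, w ∉ S → f w = G.edist r w)
    (hgreedy : ∀ v ∈ S, f v = ⨅ (w : V) (_ : G.Adj v w ∧ (w ∉ S ∨ f w < f v)), (f w + 1))
    {v : V} (p : G.Walk v r) : f v ≤ p.length := by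
  induction p with
  | nil => simp [hout _ hr]
  | @cons v w _ hadj p ih =>
    by_cases hv : v ∈ S
    · calc f v ≤ f w + 1 := le_add_one_of_adj_of_greedy hgreedy hv hadj
        _ ≤ p.length + 1 := by gcongr; exact ih hr hout
        _ = (p.cons hadj).length := by simp
    · rw [hout v hv, SimpleGraph.edist_comm]
      exact SimpleGraph.edist_le _

theorem le_edist_of_greedy (hr : r ∉ S) (hout : ∀ w, w ∉ S → f w = G.edist r w)
    (hgreedy : ∀ v ∈ S, f v = ⨅ (w : V) (_ : G.Adj v w ∧ (w ∉ S ∨ f w < f v)), (f w + 1))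
    (v : V) : f v ≤ G.edist r v := by
  rw [SimpleGraph.edist_comm]
  exact le_iInf fun p => le_length_of_greedy hr hout hgreedy p

theorem edist_le_of_greedy (hout : ∀ w, w ∉ S → f w = G.edist r w)
    (hgreedy : ∀ v ∈ S, f v = ⨅ (w : V) (_ : G.Adj v w ∧ (w ∉ S ∨ f w < f v)), (f w + 1))
    (v : V) : G.edist r v ≤ f v := by
  induction hfv : f v using WellFoundedLT.induction generalizing v with
  | _ n ih =>
    subst hfv
    by_cases hv : v ∈ S
    · rw [hgreedy v hv]
      refine le_iInf₂ fun w ⟨hadj, hw⟩ => ?_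
      have hw_le : G.edist r w ≤ f w := by
        rcases hw with hw | hw
        · exact (hout w hw).ge
        · exact ih (f w) hw w rfl
      calc G.edist r v ≤ G.edist r w + 1 := hadj.symm.edist_le_edist_add_one
        _ ≤ f w + 1 := by gcongr
    · exact (hout v hv).ge

end GreedyRepair

/-- Neighbours removed before `v` are those with `f w < f v`: the process removes vertices in
nondecreasing order of their distance bounds, and vertices removed together do not contribute to
each other. -/
theorem greedy_repair_correct (G' : SimpleGraph V) (r : V) (S : Set V) (hr : r ∉ S)
    (f : V → ℕ∞)
    (hout : ∀ w, w ∉ S → f w = G'.edist r w)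
    (hgreedy : ∀ v ∈ S,
      f v = ⨅ (w : V) (_ : G'.Adj v w ∧ (w ∉ S ∨ f w < f v)), (f w + 1)) :
    ∀ v ∈ S, f v = G'.edist r v := fun v _ =>
  (le_edist_of_greedy hr hout hgreedy v).antisymm (edist_le_of_greedy hout hgreedy v)

end BatchHL
end
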